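/- Let A be a real symmetric n×n matrix that is positive semidefinite on the subspace {x : ∑ᵢ xᵢ = 0}, with A_{ij} ≤ 0 for all i ≠ j and each row sum equal to 0, and suppose the submatrix obtained by deleting the last row and column is positive definite. Then that submatrix is an M-matrix: its inverse has all entries nonnegative. -/

import Mathlib

/-!
A positive definite Z-matrix `M` is inverse-positive. If `M x ≥ 0`, split `x = x⁺ - x⁻`.
Since `x⁺` and `x⁻` have disjoint supports and `M` is nonpositive off the diagonal,
`x⁻ ⬝ M x⁺ ≤ 0`, hence `0 ≤ x⁻ ⬝ M x ≤ -(x⁻ ⬝ M x⁻)`, which forces `x⁻ = 0` by positive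
definiteness. Applied to the columns of `M⁻¹` this gives `M⁻¹ ≥ 0`. The leading submatrix
of `A` inherits the sign pattern.
-/

namespace Matrix

variable {ι R : Type*}

def IsZMatrix [Zero R] [LE R] (M : Matrix ι ι R) : Prop :=
  ∀ i j, i ≠ j → M i j ≤ 0

theorem IsZMatrix.dotProduct_mulVec_nonpos [Fintype ι] [CommRing R] [PartialOrder R]
    [IsOrderedRing R] {M : Matrix ι ι R} (hM : M.IsZMatrix) {u v : ι → R} (hu : 0 ≤ u)
    (hv : 0 ≤ v) (huv : ∀ i, u i * v i = 0) : u ⬝ᵥ M *ᵥ v ≤ 0 := by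
  refine Finset.sum_nonpos fun i _ => ?_
  rw [mulVec, dotProduct, Finset.mul_sum]
  refine Finset.sum_nonpos fun j _ => ?_
  rcases eq_or_ne i j with rfl | hij
  · rw [mul_left_comm, huv, mul_zero]
  · rw [← mul_assoc]
    exact mul_nonpos_of_nonpos_of_nonneg
      (mul_nonpos_of_nonneg_of_nonpos (hu i) (hM i j hij)) (hv j)

theorem IsZMatrix.nonneg_of_mulVec_nonneg [Fintype ι] {M : Matrix ι ι ℝ} (hM : M.IsZMatrix)
    (hMpd : M.PosDef) {x : ι → ℝ} (hMx : 0 ≤ M *ᵥ x) : 0 ≤ x := by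
  rw [← negPart_eq_zero]
  by_contra hneg
  have hcross : x⁻ ⬝ᵥ M *ᵥ x⁺ ≤ 0 :=
    hM.dotProduct_mulVec_nonpos (negPart_nonneg x) (posPart_nonneg x) fun i => by
      simp only [Pi.negPart_apply, Pi.posPart_apply]
      rcases le_total 0 (x i) with h | h
      · rw [negPart_eq_zero.2 h, zero_mul]
      · rw [posPart_eq_zero.2 h, mul_zero]
  have hquad : 0 < x⁻ ⬝ᵥ M *ᵥ x⁻ := by simpa using hMpd.dotProduct_mulVec_pos hneg
  have hsplit : 0 ≤ x⁻ ⬝ᵥ M *ᵥ (x⁺ - x⁻) := by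
    rw [posPart_sub_negPart]
    exact dotProduct_nonneg_of_nonneg (negPart_nonneg x) hMx
  rw [mulVec_sub, dotProduct_sub] at hsplit
  linarith

theorem IsZMatrix.inv_nonneg [Fintype ι] [DecidableEq ι] {M : Matrix ι ι ℝ} (hM : M.IsZMatrix)
    (hMpd : M.PosDef) (i j : ι) : 0 ≤ M⁻¹ i j := by
  have hcol : M *ᵥ (M⁻¹ *ᵥ Pi.single j 1) = Pi.single j 1 := by
    rw [mulVec_mulVec, mul_nonsing_inv _ ((isUnit_iff_isUnit_det M).1 hMpd.isUnit), one_mulVec]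
  have := hM.nonneg_of_mulVec_nonneg hMpd (hcol ▸ Pi.single_nonneg.2 zero_le_one) i
  simpa only [mulVec_single_one, col_apply, Pi.zero_apply] using this

end Matrix

theorem stiffness_submatrix_M_matrix_general {n : ℕ}
    (A : Matrix (Fin (n + 1)) (Fin (n + 1)) ℝ)
    (hoff : ∀ i j, i ≠ j → A i j ≤ 0)
    (B : Matrix (Fin n) (Fin n) ℝ)
    (hB : B = A.submatrix Fin.castSucc Fin.castSucc)
    (hBpd : B.PosDef) :
    ∀ i j, 0 ≤ B⁻¹ i j := by
  have hBZ : B.IsZMatrix := by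
    subst hB
    exact fun i j hij => hoff _ _ (Fin.castSucc_injective _ |>.ne hij)
  exact hBZ.inv_nonneg hBpd

/-- Algebraic core of the discrete maximum principle: if a symmetric matrix `A`
is positive semidefinite on the mean-zero subspace, has nonpositive off-diagonal
entries and zero row sums, and its leading principal submatrix `B` (obtained by
deleting the last row and column) is positive definite, then `B⁻¹` is entrywise
nonnegative. -/
theorem stiffness_submatrix_M_matrix {n : ℕ}
    (A : Matrix (Fin (n + 1)) (Fin (n + 1)) ℝ)
    (hsym : A.IsSymm)
    (hpsd : ∀ x : Fin (n + 1) → ℝ, (∑ i, x i) = 0 → 0 ≤ dotProduct x (A.mulVec x))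
    (hoff : ∀ i j, i ≠ j → A i j ≤ 0)
    (hrow : ∀ i, (∑ j, A i j) = 0)
    (B : Matrix (Fin n) (Fin n) ℝ)
    (hB : B = A.submatrix Fin.castSucc Fin.castSucc)
    (hBpd : B.PosDef) :
    ∀ i j, 0 ≤ B⁻¹ i j :=
  stiffness_submatrix_M_matrix_general A hoff B hB hBpd
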